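/- Let Φ : ℝ² → ℝ be C² in variables (a,b) with Φ_{ab} = −Φ/4, and let r = (r¹,r²,r³) be a C² solution of the diagonalized drift flux system (S) on an open set U ⊆ ℝ². Then, evaluating Φ and its derivatives at (r¹(t,x), r²(t,x)), the triple η¹ := e^{(r²−r¹)/2}(Φ + 2Φ_a) r¹_x, η² := e^{(r²−r¹)/2}(Φ − 2Φ_b) r²_x, η³ := 2 e^{(r²−r¹)/2} Φ r³_x satisfies the linearized system of (S) along r on U. -/

import Mathlib

/- Each component of 𝒫(Φ) has the form e^{(r²−r¹)/2} G(r¹, r²) rᵏ_x, and the k-th linearized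
equation is a derivative along the characteristic direction (1, Vᵏ). Along it, (S) gives
rʲ ↦ (Vᵏ − Vʲ) rʲ_x, and differentiating the k-th equation in x (exchanging ∂ₜ∂ₓ by Schwarz) gives
rᵏ_x ↦ −(r¹_x + r²_x) rᵏ_x. The chain and Leibniz rules then reduce each equation to an identity
in Φ, Φ_a, Φ_b, Φ_{ab}: for k = 1, 2 it is exactly Φ_{ab} = −Φ/4, for k = 3 it holds identically. -/

noncomputable section

/-- Partial derivative with respect to the first ("time") variable. -/
def pt (f : ℝ × ℝ → ℝ) (p : ℝ × ℝ) : ℝ := fderiv ℝ f p (1, 0)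

/-- Partial derivative with respect to the second ("space") variable. -/
def px (f : ℝ × ℝ → ℝ) (p : ℝ × ℝ) : ℝ := fderiv ℝ f p (0, 1)

/-- Partial derivative with respect to the first argument (a). -/
def pa (f : ℝ × ℝ → ℝ) (q : ℝ × ℝ) : ℝ := fderiv ℝ f q (1, 0)

/-- Partial derivative with respect to the second argument (b). -/
def pb (f : ℝ × ℝ → ℝ) (q : ℝ × ℝ) : ℝ := fderiv ℝ f q (0, 1)

open Filter Topology

lemma fderiv_apply_mk (f : ℝ × ℝ → ℝ) (q : ℝ × ℝ) (x y : ℝ) :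
    fderiv ℝ f q (x, y) = x * fderiv ℝ f q (1, 0) + y * fderiv ℝ f q (0, 1) := by
  have h : ((x, y) : ℝ × ℝ) = x • ((1 : ℝ), (0 : ℝ)) + y • ((0 : ℝ), (1 : ℝ)) := by simp
  rw [h, map_add, map_smul, map_smul, smul_eq_mul, smul_eq_mul]

lemma pt_add_mul_px (f : ℝ × ℝ → ℝ) (p : ℝ × ℝ) (s : ℝ) :
    pt f p + s * px f p = fderiv ℝ f p (1, s) := by
  rw [fderiv_apply_mk, one_mul, pt, px]

section SecondDerivatives

variable {E F : Type*} [NormedAddCommGroup E] [NormedSpace ℝ E]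
  [NormedAddCommGroup F] [NormedSpace ℝ F] {f : E → F} {p : E}

lemma ContDiffAt.differentiableAt_fderiv_apply (hf : ContDiffAt ℝ 2 f p) (v : E) :
    DifferentiableAt ℝ (fun q => fderiv ℝ f q v) p :=
  ((hf.fderiv_right (m := 1) le_rfl).differentiableAt one_ne_zero).clm_apply
    (differentiableAt_const v)

lemma ContDiffAt.fderiv_fderiv_apply_comm (hf : ContDiffAt ℝ 2 f p) (v w : E) :
    fderiv ℝ (fun q => fderiv ℝ f q w) p v = fderiv ℝ (fun q => fderiv ℝ f q v) p w := by
  have hD : DifferentiableAt ℝ (fderiv ℝ f) p :=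
    (hf.fderiv_right (m := 1) le_rfl).differentiableAt one_ne_zero
  rw [fderiv_clm_apply hD (differentiableAt_const w),
    fderiv_clm_apply hD (differentiableAt_const v)]
  simpa using hf.isSymmSndFDerivAt (by simp) v w

end SecondDerivatives

lemma fderiv_apply_of_transport {f : ℝ × ℝ → ℝ} {p : ℝ × ℝ} {V : ℝ}
    (h : pt f p + V * px f p = 0) (s : ℝ) :
    fderiv ℝ f p (1, s) = (s - V) * px f p := by
  rw [← pt_add_mul_px]
  linear_combination h

lemma fderiv_px_apply_of_transport {f V : ℝ × ℝ → ℝ} {p : ℝ × ℝ} (hf : ContDiffAt ℝ 2 f p)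
    (hV : DifferentiableAt ℝ V p) (hS : ∀ᶠ q in 𝓝 p, pt f q + V q * px f q = 0) :
    fderiv ℝ (px f) p (1, V p) = -(px V p * px f p) := by
  have hpt : pt f =ᶠ[𝓝 p] fun q => -(V q * px f q) :=
    hS.mono fun q hq => by linear_combination hq
  have hcomm : pt (px f) p = px (pt f) p := hf.fderiv_fderiv_apply_comm _ _
  have hpxf : DifferentiableAt ℝ (px f) p := hf.differentiableAt_fderiv_apply _
  have hpx : px (fun q => -(V q * px f q)) p = -(px V p * px f p + V p * px (px f) p) := by
    rw [px, fderiv_fun_neg, fderiv_fun_mul hV hpxf]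
    simp only [neg_apply, add_apply, smul_apply, smul_eq_mul, px]
    ring
  rw [← pt_add_mul_px, hcomm, px, hpt.fderiv_eq, ← px, hpx]
  ring

def expWeighted (r₁ r₂ G u : ℝ × ℝ → ℝ) (p : ℝ × ℝ) : ℝ :=
  Real.exp ((r₂ p - r₁ p) / 2) * G (r₁ p, r₂ p) * u p

lemma fderiv_expWeighted_apply {r₁ r₂ G u : ℝ × ℝ → ℝ} {p : ℝ × ℝ}
    (hr₁ : DifferentiableAt ℝ r₁ p) (hr₂ : DifferentiableAt ℝ r₂ p)
    (hG : DifferentiableAt ℝ G (r₁ p, r₂ p)) (hu : DifferentiableAt ℝ u p) (v : ℝ × ℝ) :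
    fderiv ℝ (expWeighted r₁ r₂ G u) p v = Real.exp ((r₂ p - r₁ p) / 2) *
      (((fderiv ℝ r₂ p v - fderiv ℝ r₁ p v) / 2 * G (r₁ p, r₂ p)
        + fderiv ℝ r₁ p v * pa G (r₁ p, r₂ p) + fderiv ℝ r₂ p v * pb G (r₁ p, r₂ p)) * u p
        + G (r₁ p, r₂ p) * fderiv ℝ u p v) := by
  have hexp := ((hr₂.hasFDerivAt.sub hr₁.hasFDerivAt).mul_const (2⁻¹ : ℝ)).exp
  have hGr := hG.hasFDerivAt.comp p (hr₁.hasFDerivAt.prodMk hr₂.hasFDerivAt)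
  -- accepted because `x / 2` unfolds to `x * 2⁻¹`
  have h : HasFDerivAt (expWeighted r₁ r₂ G u) _ p := (hexp.mul hGr).mul hu.hasFDerivAt
  rw [h.fderiv]
  simp only [add_apply, smul_apply, smul_eq_mul, ContinuousLinearMap.comp_apply,
    ContinuousLinearMap.prod_apply, sub_apply, Pi.mul_apply, Pi.sub_apply, Function.comp_apply,
    ← div_eq_mul_inv]
  rw [fderiv_apply_mk G, pa, pb]
  ring

section GeneralizedSymmetry

variable {Φ r₁ r₂ : ℝ × ℝ → ℝ} {p q : ℝ × ℝ}

lemma pb_add_two_mul_pa (hΦ : ContDiffAt ℝ 2 Φ q) (hKG : pb (pa Φ) q = -Φ q / 4) :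
    pb (fun z => Φ z + 2 * pa Φ z) q = pb Φ q - Φ q / 2 := by
  have hpa : DifferentiableAt ℝ (pa Φ) q := hΦ.differentiableAt_fderiv_apply _
  rw [pb, fderiv_fun_add (hΦ.differentiableAt two_ne_zero) (hpa.const_mul 2),
    fderiv_const_mul hpa]
  simp only [add_apply, smul_apply, smul_eq_mul]
  rw [← pb, ← pb, hKG]
  ring

lemma pa_sub_two_mul_pb (hΦ : ContDiffAt ℝ 2 Φ q) (hKG : pb (pa Φ) q = -Φ q / 4) :
    pa (fun z => Φ z - 2 * pb Φ z) q = pa Φ q + Φ q / 2 := by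
  have hpb : DifferentiableAt ℝ (pb Φ) q := hΦ.differentiableAt_fderiv_apply _
  have hcomm : pa (pb Φ) q = pb (pa Φ) q := hΦ.fderiv_fderiv_apply_comm _ _
  rw [pa, fderiv_fun_sub (hΦ.differentiableAt two_ne_zero) (hpb.const_mul 2),
    fderiv_const_mul hpb]
  simp only [sub_apply, smul_apply, smul_eq_mul]
  rw [← pa, ← pa, hcomm, hKG]
  ring

def genSymm₁ (Φ r₁ r₂ : ℝ × ℝ → ℝ) : ℝ × ℝ → ℝ :=
  expWeighted r₁ r₂ (fun z => Φ z + 2 * pa Φ z) (px r₁)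

def genSymm₂ (Φ r₁ r₂ : ℝ × ℝ → ℝ) : ℝ × ℝ → ℝ :=
  expWeighted r₁ r₂ (fun z => Φ z - 2 * pb Φ z) (px r₂)

def genSymm₃ (Φ r₁ r₂ r₃ : ℝ × ℝ → ℝ) : ℝ × ℝ → ℝ :=
  expWeighted r₁ r₂ (fun z => 2 * Φ z) (px r₃)

lemma genSymm₁_linearized_eq (hΦ : ContDiffAt ℝ 2 Φ (r₁ p, r₂ p))
    (hKG : pb (pa Φ) (r₁ p, r₂ p) = -Φ (r₁ p, r₂ p) / 4)
    (hr₁ : ContDiffAt ℝ 2 r₁ p) (hr₂ : DifferentiableAt ℝ r₂ p)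
    (hS₁ : ∀ᶠ q in 𝓝 p, pt r₁ q + (r₁ q + r₂ q + 1) * px r₁ q = 0)
    (hS₂ : pt r₂ p + (r₁ p + r₂ p - 1) * px r₂ p = 0) :
    pt (genSymm₁ Φ r₁ r₂) p + (r₁ p + r₂ p + 1) * px (genSymm₁ Φ r₁ r₂) p
      + (genSymm₁ Φ r₁ r₂ p + genSymm₂ Φ r₁ r₂ p) * px r₁ p = 0 := by
  have hd₁ : DifferentiableAt ℝ r₁ p := hr₁.differentiableAt two_ne_zero
  have hG : DifferentiableAt ℝ (fun z => Φ z + 2 * pa Φ z) (r₁ p, r₂ p) :=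
    (hΦ.differentiableAt two_ne_zero).add ((hΦ.differentiableAt_fderiv_apply _).const_mul 2)
  rw [pt_add_mul_px, genSymm₁,
    fderiv_expWeighted_apply (u := px r₁) hd₁ hr₂ hG (hr₁.differentiableAt_fderiv_apply _),
    fderiv_apply_of_transport hS₁.self_of_nhds, fderiv_apply_of_transport hS₂,
    fderiv_px_apply_of_transport hr₁ ((hd₁.fun_add hr₂).add_const 1) hS₁,
    pb_add_two_mul_pa hΦ hKG]
  simp only [genSymm₂, expWeighted, px, fderiv_add_const, fderiv_fun_add hd₁ hr₂, add_apply]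
  ring

lemma genSymm₂_linearized_eq (hΦ : ContDiffAt ℝ 2 Φ (r₁ p, r₂ p))
    (hKG : pb (pa Φ) (r₁ p, r₂ p) = -Φ (r₁ p, r₂ p) / 4)
    (hr₁ : DifferentiableAt ℝ r₁ p) (hr₂ : ContDiffAt ℝ 2 r₂ p)
    (hS₁ : pt r₁ p + (r₁ p + r₂ p + 1) * px r₁ p = 0)
    (hS₂ : ∀ᶠ q in 𝓝 p, pt r₂ q + (r₁ q + r₂ q - 1) * px r₂ q = 0) :
    pt (genSymm₂ Φ r₁ r₂) p + (r₁ p + r₂ p - 1) * px (genSymm₂ Φ r₁ r₂) p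
      + (genSymm₁ Φ r₁ r₂ p + genSymm₂ Φ r₁ r₂ p) * px r₂ p = 0 := by
  have hd₂ : DifferentiableAt ℝ r₂ p := hr₂.differentiableAt two_ne_zero
  have hG : DifferentiableAt ℝ (fun z => Φ z - 2 * pb Φ z) (r₁ p, r₂ p) :=
    (hΦ.differentiableAt two_ne_zero).sub ((hΦ.differentiableAt_fderiv_apply _).const_mul 2)
  rw [pt_add_mul_px, genSymm₂,
    fderiv_expWeighted_apply (u := px r₂) hr₁ hd₂ hG (hr₂.differentiableAt_fderiv_apply _),
    fderiv_apply_of_transport hS₁, fderiv_apply_of_transport hS₂.self_of_nhds,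
    fderiv_px_apply_of_transport hr₂ ((hr₁.fun_add hd₂).sub_const 1) hS₂,
    pa_sub_two_mul_pb hΦ hKG]
  simp only [genSymm₁, expWeighted, px, fderiv_sub_const, fderiv_fun_add hr₁ hd₂, add_apply]
  ring

lemma genSymm₃_linearized_eq {r₃ : ℝ × ℝ → ℝ} (hΦ : DifferentiableAt ℝ Φ (r₁ p, r₂ p))
    (hr₁ : DifferentiableAt ℝ r₁ p) (hr₂ : DifferentiableAt ℝ r₂ p) (hr₃ : ContDiffAt ℝ 2 r₃ p)
    (hS₁ : pt r₁ p + (r₁ p + r₂ p + 1) * px r₁ p = 0)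
    (hS₂ : pt r₂ p + (r₁ p + r₂ p - 1) * px r₂ p = 0)
    (hS₃ : ∀ᶠ q in 𝓝 p, pt r₃ q + (r₁ q + r₂ q) * px r₃ q = 0) :
    pt (genSymm₃ Φ r₁ r₂ r₃) p + (r₁ p + r₂ p) * px (genSymm₃ Φ r₁ r₂ r₃) p
      + (genSymm₁ Φ r₁ r₂ p + genSymm₂ Φ r₁ r₂ p) * px r₃ p = 0 := by
  rw [pt_add_mul_px, genSymm₃,
    fderiv_expWeighted_apply (u := px r₃) hr₁ hr₂ (hΦ.const_mul 2)
      (hr₃.differentiableAt_fderiv_apply _),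
    fderiv_apply_of_transport hS₁, fderiv_apply_of_transport hS₂,
    fderiv_px_apply_of_transport hr₃ (hr₁.fun_add hr₂) hS₃]
  simp only [genSymm₁, genSymm₂, expWeighted, pa, pb, px, fderiv_const_mul hΦ,
    fderiv_fun_add hr₁ hr₂, add_apply, smul_apply, smul_eq_mul]
  ring

end GeneralizedSymmetry

theorem P_Phi_generalized_symmetries
    (Φ : ℝ × ℝ → ℝ) (hΦ : ContDiff ℝ 2 Φ)
    (hKG : ∀ q : ℝ × ℝ, pb (pa Φ) q = -Φ q / 4)
    (U : Set (ℝ × ℝ)) (hU : IsOpen U)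
    (r₁ r₂ r₃ : ℝ × ℝ → ℝ)
    (hr₁ : ContDiffOn ℝ 2 r₁ U) (hr₂ : ContDiffOn ℝ 2 r₂ U)
    (hr₃ : ContDiffOn ℝ 2 r₃ U)
    (hS₁ : ∀ p ∈ U, pt r₁ p + (r₁ p + r₂ p + 1) * px r₁ p = 0)
    (hS₂ : ∀ p ∈ U, pt r₂ p + (r₁ p + r₂ p - 1) * px r₂ p = 0)
    (hS₃ : ∀ p ∈ U, pt r₃ p + (r₁ p + r₂ p) * px r₃ p = 0) :
    let η₁ : ℝ × ℝ → ℝ := fun p => Real.exp ((r₂ p - r₁ p) / 2) *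
      (Φ (r₁ p, r₂ p) + 2 * pa Φ (r₁ p, r₂ p)) * px r₁ p
    let η₂ : ℝ × ℝ → ℝ := fun p => Real.exp ((r₂ p - r₁ p) / 2) *
      (Φ (r₁ p, r₂ p) - 2 * pb Φ (r₁ p, r₂ p)) * px r₂ p
    let η₃ : ℝ × ℝ → ℝ := fun p => 2 * Real.exp ((r₂ p - r₁ p) / 2) *
      Φ (r₁ p, r₂ p) * px r₃ p
    ∀ p ∈ U,
      pt η₁ p + (r₁ p + r₂ p + 1) * px η₁ p + (η₁ p + η₂ p) * px r₁ p = 0 ∧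
      pt η₂ p + (r₁ p + r₂ p - 1) * px η₂ p + (η₁ p + η₂ p) * px r₂ p = 0 ∧
      pt η₃ p + (r₁ p + r₂ p) * px η₃ p + (η₁ p + η₂ p) * px r₃ p = 0 := by
  intro η₁ η₂ η₃ p hp
  have hUp : U ∈ 𝓝 p := hU.mem_nhds hp
  have hr₁p : ContDiffAt ℝ 2 r₁ p := hr₁.contDiffAt hUp
  have hr₂p : ContDiffAt ℝ 2 r₂ p := hr₂.contDiffAt hUp
  have hη₃ : η₃ = genSymm₃ Φ r₁ r₂ r₃ := by
    funext q
    simp only [η₃, genSymm₃, expWeighted]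
    ring
  refine ⟨genSymm₁_linearized_eq hΦ.contDiffAt (hKG _) hr₁p (hr₂p.differentiableAt two_ne_zero)
      (eventually_of_mem hUp hS₁) (hS₂ p hp),
    genSymm₂_linearized_eq hΦ.contDiffAt (hKG _) (hr₁p.differentiableAt two_ne_zero) hr₂p
      (hS₁ p hp) (eventually_of_mem hUp hS₂), ?_⟩
  rw [hη₃]
  exact genSymm₃_linearized_eq (hΦ.differentiable two_ne_zero _)
    (hr₁p.differentiableAt two_ne_zero) (hr₂p.differentiableAt two_ne_zero)
    (hr₃.contDiffAt hUp) (hS₁ p hp) (hS₂ p hp) (eventually_of_mem hUp hS₃)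

end
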